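/- For every t > 0 there exist constants C, c > 0 such that for every real m ≥ 1, every starting point x ∈ ℕ, and θ := ⌊m² t⌋, the reflected lazy Markov chain T of length θ started at x satisfies, for all y ≥ 0, P_T[ Λ^{(0,0)}_θ ≥ m·y ] ≤ C·exp(−c y²), where Λ^{(0,0)}_θ = #{0 ≤ u ≤ θ−1 : p(u) = p(u+1) = 0}. -/
import Mathlib


open scoped Classical ENNReal

/-- One-step transition weight of the reflected lazy Markov chain on ℕ:
`q(a, a±1) = q(a,a) = 1/3` for `a ≥ 1`, `q(0,0) = 2/3`, `q(0,1) = 1/3`,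
and `q(a,b) = 0` otherwise. -/
noncomputable def reflStep (a b : ℕ) : ℝ :=
  if a = 0 then (if b = 0 then 2 / 3 else if b = 1 then 1 / 3 else 0)
  else (if b + 1 = a ∨ b = a ∨ b = a + 1 then 1 / 3 else 0)

/-- The weight of a path `p : {0,…,θ} → ℕ` under the reflected lazy Markov chain of
length `θ` started at `x`: the product of the one-step transition weights, and `0`
unless `p 0 = x`. -/
noncomputable def reflWeight (θ x : ℕ) (p : Fin (θ + 1) → ℕ) : ℝ :=
  (if p 0 = x then 1 else 0) * ∏ u : Fin θ, reflStep (p u.castSucc) (p u.succ)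

lemma reflStep_nonneg (a b : ℕ) : 0 ≤ reflStep a b := by
  unfold reflStep; split_ifs <;> norm_num

noncomputable def stepFac (l : ℝ) (a b : ℕ) : ℝ :=
  reflStep a b * Real.exp (l * (if a = 0 ∧ b = 0 then 1 else 0))

lemma stepFac_nonneg (l : ℝ) (a b : ℕ) : 0 ≤ stepFac l a b :=
  mul_nonneg (reflStep_nonneg _ _) (Real.exp_nonneg _)

noncomputable def Qe (l : ℝ) (a b : ℕ) : ℝ≥0∞ := ENNReal.ofReal (stepFac l a b)

noncomputable def Fe (l : ℝ) (θ x : ℕ) : ℝ≥0∞ :=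
  ∑' p : Fin (θ + 1) → ℕ,
    (if p 0 = x then 1 else 0) * ∏ u : Fin θ, Qe l (p u.castSucc) (p u.succ)

lemma Fe_zero (l : ℝ) (x : ℕ) : Fe l 0 x = 1 := by
  unfold Fe
  rw [← (Equiv.funUnique (Fin 1) ℕ).symm.tsum_eq]
  simp [tsum_ite_eq]

lemma Fe_succ (l : ℝ) (θ x : ℕ) : Fe l (θ + 1) x = ∑' b, Qe l x b * Fe l θ b := by
  unfold Fe
  rw [← (Fin.consEquiv (fun _ : Fin (θ + 2) => ℕ)).tsum_eq]
  have key : ∀ (a : ℕ) (q : Fin (θ + 1) → ℕ),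
      (fun (z : ℕ × (Fin (θ + 1) → ℕ)) =>
        (if (Fin.cons z.1 z.2 : Fin (θ+2) → ℕ) 0 = x then (1:ℝ≥0∞) else 0) *
          ∏ u : Fin (θ+1), Qe l ((Fin.cons z.1 z.2 : Fin (θ+2) → ℕ) u.castSucc)
            ((Fin.cons z.1 z.2 : Fin (θ+2) → ℕ) u.succ)) (a, q)
      = (if a = x then (1:ℝ≥0∞) else 0) * (Qe l a (q 0) *
          ∏ u : Fin θ, Qe l (q u.castSucc) (q u.succ)) := by
    intro a q
    dsimp only
    rw [Fin.prod_univ_succ]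
    have h0 : ∀ u : Fin θ, (Fin.cons a q : Fin (θ+2) → ℕ) u.succ.castSucc = q u.castSucc :=
      fun u => by rw [← Fin.succ_castSucc, Fin.cons_succ]
    simp [Fin.cons_succ, h0, mul_assoc]
  calc (∑' z : ℕ × (Fin (θ + 1) → ℕ),
        (if (Fin.cons z.1 z.2 : Fin (θ+2) → ℕ) 0 = x then (1:ℝ≥0∞) else 0) *
          ∏ u : Fin (θ+1), Qe l ((Fin.cons z.1 z.2 : Fin (θ+2) → ℕ) u.castSucc)
            ((Fin.cons z.1 z.2 : Fin (θ+2) → ℕ) u.succ))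
      = ∑' (a : ℕ) (q : Fin (θ+1) → ℕ), (if a = x then (1:ℝ≥0∞) else 0) *
          (Qe l a (q 0) * ∏ u : Fin θ, Qe l (q u.castSucc) (q u.succ)) := by
        rw [← ENNReal.tsum_prod]
        exact tsum_congr fun z => key z.1 z.2
    _ = ∑' (a : ℕ), (if a = x then (1:ℝ≥0∞) else 0) *
          ∑' (q : Fin (θ+1) → ℕ), (Qe l a (q 0) * ∏ u : Fin θ, Qe l (q u.castSucc) (q u.succ)) := by
        exact tsum_congr fun a => ENNReal.tsum_mul_left
    _ = ∑' (q : Fin (θ+1) → ℕ), Qe l x (q 0) * ∏ u : Fin θ, Qe l (q u.castSucc) (q u.succ) := by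
        rw [show (fun a => (if a = x then (1:ℝ≥0∞) else 0) *
          ∑' (q : Fin (θ+1) → ℕ), (Qe l a (q 0) * ∏ u : Fin θ, Qe l (q u.castSucc) (q u.succ)))
          = fun a => (if a = x then (∑' (q : Fin (θ+1) → ℕ), Qe l x (q 0) *
              ∏ u : Fin θ, Qe l (q u.castSucc) (q u.succ)) else 0) from ?_]
        · exact tsum_ite_eq x _
        · funext a; split_ifs with h
          · subst h; rw [one_mul]
          · rw [zero_mul]
    _ = ∑' b, Qe l x b * Fe l θ b := by
        unfold Fe
        have h1 : ∀ b : ℕ, Qe l x b * (∑' q : Fin (θ+1) → ℕ,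
            (if q 0 = b then (1:ℝ≥0∞) else 0) * ∏ u : Fin θ, Qe l (q u.castSucc) (q u.succ))
            = ∑' q : Fin (θ+1) → ℕ, (if q 0 = b then (1:ℝ≥0∞) else 0) *
              (Qe l x b * ∏ u : Fin θ, Qe l (q u.castSucc) (q u.succ)) := by
          intro b
          rw [← ENNReal.tsum_mul_left]
          exact tsum_congr fun q => by ring
        rw [tsum_congr h1, ENNReal.tsum_comm]
        apply tsum_congr; intro q
        rw [show (fun b => (if q 0 = b then (1:ℝ≥0∞) else 0) *
            (Qe l x b * ∏ u : Fin θ, Qe l (q u.castSucc) (q u.succ)))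
          = fun b => (if b = q 0 then Qe l x (q 0) *
              ∏ u : Fin θ, Qe l (q u.castSucc) (q u.succ) else 0) from ?_, tsum_ite_eq]
        funext b; by_cases h : b = q 0
        · subst h; simp
        · simp [h, Ne.symm h]
noncomputable def hfun (l : ℝ) (x : ℕ) : ℝ := 1 + Real.exp (-(6 * l) * x)

lemma hfun_pos (l : ℝ) (x : ℕ) : 0 < hfun l x := by
  have := Real.exp_pos (-(6 * l) * x); unfold hfun; linarith

lemma hfun_one_le (l : ℝ) (hl : 0 ≤ l) (x : ℕ) : 1 ≤ hfun l x := by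
  have := Real.exp_pos (-(6 * l) * x); unfold hfun; linarith

lemma hfun_le_two (l : ℝ) (hl : 0 ≤ l) (x : ℕ) : hfun l x ≤ 2 := by
  have h : Real.exp (-(6 * l) * x) ≤ 1 := by
    apply Real.exp_le_one_iff.2
    have : (0:ℝ) ≤ (x:ℝ) := Nat.cast_nonneg x
    nlinarith
  unfold hfun; linarith

lemma row_bound (l : ℝ) (hl : 0 ≤ l) (hl15 : l ≤ 1/15) (x : ℕ) :
    ∑' b, Qe l x b * ENNReal.ofReal (hfun l b)
      ≤ ENNReal.ofReal (Real.exp (30 * l ^ 2) * hfun l x) := by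
  have hK : 1 + 30 * l ^ 2 ≤ Real.exp (30 * l ^ 2) := by
    have := Real.add_one_le_exp (30 * l ^ 2); linarith
  match x with
  | 0 =>
    have hvan : ∀ b ∉ ({0, 1} : Finset ℕ),
        Qe l 0 b * ENNReal.ofReal (hfun l b) = 0 := by
      intro b hb
      simp only [Finset.mem_insert, Finset.mem_singleton, not_or] at hb
      have : reflStep 0 b = 0 := by
        unfold reflStep; simp [hb.1, hb.2]
      unfold Qe stepFac
      rw [this]; simp
    rw [tsum_eq_sum hvan]
    rw [Finset.sum_insert (by simp), Finset.sum_singleton]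
    have hQ0 : Qe l 0 0 = ENNReal.ofReal (2/3 * Real.exp l) := by
      unfold Qe stepFac reflStep; norm_num
    have hQ1 : Qe l 0 1 = ENNReal.ofReal (1/3) := by
      unfold Qe stepFac reflStep; norm_num
    rw [hQ0, hQ1]
    rw [← ENNReal.ofReal_mul (by positivity), ← ENNReal.ofReal_mul (by norm_num),
      ← ENNReal.ofReal_add (mul_nonneg (by positivity) (hfun_pos l 0).le)
        (mul_nonneg (by norm_num) (hfun_pos l 1).le)]
    apply ENNReal.ofReal_le_ofReal
    -- real inequality at 0
    have e0 : Real.exp (-(6*l) * (0:ℕ)) = 1 := by norm_num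
    have e1 : Real.exp (-(6*l) * (1:ℕ)) = Real.exp (-(6*l)) := by norm_num
    unfold hfun
    rw [e0, e1]
    set E1 := Real.exp l with hE1def
    set E2 := Real.exp (-(6*l)) with hE2def
    have hE1pos : 0 < E1 := Real.exp_pos _
    have hE2pos : 0 < E2 := Real.exp_pos _
    have hE1 : (1 - l) * E1 ≤ 1 := by
      have h := Real.add_one_le_exp (-l)
      have : Real.exp (-l) * E1 = 1 := by
        rw [hE1def, ← Real.exp_add]; norm_num
      nlinarith
    have hE2 : (1 + 6*l) * E2 ≤ 1 := by
      have h := Real.add_one_le_exp (6*l)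
      have : Real.exp (6*l) * E2 = 1 := by
        rw [hE2def, ← Real.exp_add]; norm_num
      nlinarith
    have key : 4 * E1 + E2 ≤ 5 := by
      nlinarith [mul_nonneg hl (sub_nonneg.2 hl15), mul_pos hE1pos hE2pos,
        mul_le_mul_of_nonneg_left hE1 (by linarith : (0:ℝ) ≤ 1 + 6*l),
        mul_le_mul_of_nonneg_left hE2 (by linarith : (0:ℝ) ≤ 1 - l)]
    have hKK : 1 ≤ Real.exp (30 * l ^ 2) := Real.one_le_exp (by positivity)
    nlinarith
  | Nat.succ n =>
    have hvan : ∀ b ∉ ({n, n+1, n+2} : Finset ℕ),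
        Qe l (n+1) b * ENNReal.ofReal (hfun l b) = 0 := by
      intro b hb
      simp only [Finset.mem_insert, Finset.mem_singleton, not_or] at hb
      have : reflStep (n+1) b = 0 := by
        unfold reflStep
        rw [if_neg (by omega)]
        rw [if_neg (by omega)]
      unfold Qe stepFac
      rw [this]; simp
    rw [tsum_eq_sum hvan]
    rw [Finset.sum_insert (by simp), Finset.sum_insert (by simp), Finset.sum_singleton]
    have hQ : ∀ b, reflStep (n+1) b ≠ 0 → Qe l (n+1) b = ENNReal.ofReal (reflStep (n+1) b) := by
      intro b _
      unfold Qe stepFac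
      rw [if_neg (by omega : ¬ (n+1 = 0 ∧ b = 0))]
      norm_num
    have hs1 : reflStep (n+1) n = 1/3 := by unfold reflStep; rw [if_neg (by omega)]; rw [if_pos (by omega)]
    have hs2 : reflStep (n+1) (n+1) = 1/3 := by unfold reflStep; rw [if_neg (by omega)]; rw [if_pos (by omega)]
    have hs3 : reflStep (n+1) (n+2) = 1/3 := by unfold reflStep; rw [if_neg (by omega)]; rw [if_pos (by omega)]
    rw [hQ n (by rw [hs1]; norm_num), hQ (n+1) (by rw [hs2]; norm_num), hQ (n+2) (by rw [hs3]; norm_num),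
      hs1, hs2, hs3]
    rw [← ENNReal.ofReal_mul (by norm_num), ← ENNReal.ofReal_mul (by norm_num),
      ← ENNReal.ofReal_mul (by norm_num),
      ← ENNReal.ofReal_add (mul_nonneg (by norm_num) (hfun_pos l (n+1)).le)
        (mul_nonneg (by norm_num) (hfun_pos l (n+2)).le),
      ← ENNReal.ofReal_add (mul_nonneg (by norm_num) (hfun_pos l n).le)
        (add_nonneg (mul_nonneg (by norm_num) (hfun_pos l (n+1)).le)
          (mul_nonneg (by norm_num) (hfun_pos l (n+2)).le))]
    apply ENNReal.ofReal_le_ofReal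
    unfold hfun
    set D := Real.exp (-(6*l) * n) with hDdef
    set B := Real.exp (-(6*l)) with hBdef
    have eB1 : Real.exp (-(6*l) * ((n:ℕ)+1:ℕ)) = D * B := by
      rw [hDdef, hBdef, ← Real.exp_add]; congr 1; push_cast; ring
    have eB2 : Real.exp (-(6*l) * ((n:ℕ)+2:ℕ)) = D * B * B := by
      rw [hDdef, hBdef, ← Real.exp_add, ← Real.exp_add]; congr 1; push_cast; ring
    rw [eB1, eB2]
    have hDpos : 0 < D := Real.exp_pos _
    have hBpos : 0 < B := Real.exp_pos _
    have hD1 : D ≤ 1 := by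
      apply Real.exp_le_one_iff.2
      have : (0:ℝ) ≤ (n:ℝ) := Nat.cast_nonneg n
      nlinarith
    have hB1 : B ≤ 1 := by
      apply Real.exp_le_one_iff.2; linarith
    have hBl : 1 - 6*l ≤ B := by
      have := Real.add_one_le_exp (-(6*l)); rw [hBdef]; linarith
    have hsq : (1 - B)^2 ≤ 36 * l^2 := by nlinarith
    have hDsq : D * (1 - B)^2 ≤ 36 * l^2 := by nlinarith [sq_nonneg (1-B)]
    set K := Real.exp (30 * l ^ 2) with hKdef
    have hDB : 0 ≤ D * B := by positivity
    nlinarith [mul_le_mul_of_nonneg_right hK hDB]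

lemma Fe_le (l : ℝ) (hl : 0 ≤ l) (hl15 : l ≤ 1/15) :
    ∀ (θ x : ℕ), Fe l θ x ≤ ENNReal.ofReal (hfun l x * Real.exp (30 * l ^ 2) ^ θ) := by
  intro θ
  induction θ with
  | zero =>
    intro x
    rw [Fe_zero]
    rw [pow_zero, mul_one]
    rw [show (1:ℝ≥0∞) = ENNReal.ofReal 1 from by simp]
    exact ENNReal.ofReal_le_ofReal (hfun_one_le l hl x)
  | succ θ ih =>
    intro x
    rw [Fe_succ]
    calc ∑' b, Qe l x b * Fe l θ b
        ≤ ∑' b, Qe l x b * (ENNReal.ofReal (hfun l b) * ENNReal.ofReal (Real.exp (30 * l ^ 2) ^ θ)) := by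
          apply ENNReal.tsum_le_tsum
          intro b
          apply mul_le_mul_right
          calc Fe l θ b ≤ ENNReal.ofReal (hfun l b * Real.exp (30 * l ^ 2) ^ θ) := ih b
            _ = ENNReal.ofReal (hfun l b) * ENNReal.ofReal (Real.exp (30 * l ^ 2) ^ θ) :=
              ENNReal.ofReal_mul (hfun_pos l b).le
      _ = (∑' b, Qe l x b * ENNReal.ofReal (hfun l b)) * ENNReal.ofReal (Real.exp (30 * l ^ 2) ^ θ) := by
          rw [← ENNReal.tsum_mul_right]
          exact tsum_congr fun b => by ring
      _ ≤ ENNReal.ofReal (Real.exp (30 * l ^ 2) * hfun l x) * ENNReal.ofReal (Real.exp (30 * l ^ 2) ^ θ) :=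
          mul_le_mul_left (row_bound l hl hl15 x) _
      _ = ENNReal.ofReal (hfun l x * Real.exp (30 * l ^ 2) ^ (θ + 1)) := by
          rw [← ENNReal.ofReal_mul (mul_nonneg (Real.exp_pos _).le (hfun_pos l x).le)]
          congr 1
          ring

/-- pointwise identity between the real weight with exponential tilt and the `ℝ≥0∞` term. -/
lemma ennTerm_eq (l : ℝ) (θ x : ℕ) (p : Fin (θ + 1) → ℕ) :
    (if p 0 = x then (1:ℝ≥0∞) else 0) * ∏ u : Fin θ, Qe l (p u.castSucc) (p u.succ)
      = ENNReal.ofReal (reflWeight θ x p *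
          Real.exp (l * ((Finset.univ.filter (fun u : Fin θ =>
            p u.castSucc = 0 ∧ p u.succ = 0)).card : ℝ))) := by
  have hcard : ((Finset.univ.filter (fun u : Fin θ =>
      p u.castSucc = 0 ∧ p u.succ = 0)).card : ℝ)
      = ∑ u : Fin θ, (if p u.castSucc = 0 ∧ p u.succ = 0 then (1:ℝ) else 0) := by
    rw [Finset.card_filter]
    push_cast
    exact Finset.sum_congr rfl fun u _ => by split_ifs <;> norm_num
  have hexp : Real.exp (l * ((Finset.univ.filter (fun u : Fin θ =>
      p u.castSucc = 0 ∧ p u.succ = 0)).card : ℝ))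
      = ∏ u : Fin θ, Real.exp (l * (if p u.castSucc = 0 ∧ p u.succ = 0 then (1:ℝ) else 0)) := by
    rw [hcard, Finset.mul_sum, Real.exp_sum]
  have hw : reflWeight θ x p * Real.exp (l * ((Finset.univ.filter (fun u : Fin θ =>
      p u.castSucc = 0 ∧ p u.succ = 0)).card : ℝ))
      = (if p 0 = x then (1:ℝ) else 0) * ∏ u : Fin θ, stepFac l (p u.castSucc) (p u.succ) := by
    rw [hexp]
    unfold reflWeight stepFac
    rw [mul_assoc, ← Finset.prod_mul_distrib]
  rw [hw]
  rw [ENNReal.ofReal_mul (by split_ifs <;> norm_num)]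
  congr 1
  · split_ifs <;> simp
  · rw [ENNReal.ofReal_prod_of_nonneg (fun u _ => stepFac_nonneg l _ _)]
    rfl

lemma reflWeight_nonneg (θ x : ℕ) (p : Fin (θ + 1) → ℕ) : 0 ≤ reflWeight θ x p := by
  unfold reflWeight
  apply mul_nonneg
  · split_ifs <;> norm_num
  · exact Finset.prod_nonneg fun u _ => reflStep_nonneg _ _


/-- Sub-Gaussian tail bound, uniform in `m ≥ 1` and in the starting point
`x`, for the occupation `Λ^{(0,0)}_θ` of the self-edge at `0` by the reflected lazy
Markov chain of length `θ = ⌊m²t⌋` started at `x`.  `P_T[E]` is the total weight of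
paths in `E`. -/
theorem reflected_self_edge_zero_subgaussian_tail :
    ∀ t : ℝ, 0 < t → ∃ C > (0 : ℝ), ∃ c > (0 : ℝ),
      ∀ m : ℝ, 1 ≤ m → ∀ x : ℕ, ∀ y : ℝ, 0 ≤ y →
        (∑' p : Fin (⌊m ^ 2 * t⌋₊ + 1) → ℕ,
            if m * y ≤ ((Finset.univ.filter (fun u : Fin ⌊m ^ 2 * t⌋₊ =>
                p u.castSucc = 0 ∧ p u.succ = 0)).card : ℝ)
            then reflWeight ⌊m ^ 2 * t⌋₊ x p else 0)
          ≤ C * Real.exp (-c * y ^ 2) := by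
  intro t ht
  refine ⟨2, by norm_num, 1/(120*t), by positivity, ?_⟩
  intro m hm x y hy
  set θ := ⌊m ^ 2 * t⌋₊ with hθdef
  set Λ : (Fin (θ + 1) → ℕ) → ℕ := fun p =>
    (Finset.univ.filter (fun u : Fin θ => p u.castSucc = 0 ∧ p u.succ = 0)).card with hΛdef
  have hΛle : ∀ p, (Λ p : ℝ) ≤ (θ : ℝ) := by
    intro p
    have h1 : Λ p ≤ θ := by
      calc Λ p ≤ Finset.univ.card := Finset.card_filter_le _ _
        _ = θ := by simp
    exact_mod_cast h1
  have main : ∀ l : ℝ, 0 ≤ l → l ≤ 1/15 →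
      (∑' p : Fin (θ + 1) → ℕ, if m * y ≤ ((Λ p : ℕ) : ℝ) then reflWeight θ x p else 0)
        ≤ Real.exp (-(l * (m * y))) * (2 * Real.exp (30 * l ^ 2) ^ θ) := by
    intro l hl hl15
    have hKpow : (0:ℝ) ≤ Real.exp (30 * l ^ 2) ^ θ := by positivity
    apply tsum_le_of_sum_le' (by positivity)
    intro s
    have term_le : ∀ p : Fin (θ + 1) → ℕ,
        (if m * y ≤ ((Λ p : ℕ) : ℝ) then reflWeight θ x p else 0)
          ≤ Real.exp (-(l * (m * y))) * (reflWeight θ x p * Real.exp (l * (Λ p : ℝ))) := by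
      intro p
      have hwn := reflWeight_nonneg θ x p
      split_ifs with hcond
      · have h1 : (1:ℝ) ≤ Real.exp (-(l * (m * y))) * Real.exp (l * (Λ p : ℝ)) := by
          rw [← Real.exp_add]
          apply Real.one_le_exp
          nlinarith
        nlinarith [Real.exp_pos (-(l * (m * y))), Real.exp_pos (l * (Λ p : ℝ))]
      · positivity
    calc ∑ p ∈ s, (if m * y ≤ ((Λ p : ℕ) : ℝ) then reflWeight θ x p else 0)
        ≤ ∑ p ∈ s, Real.exp (-(l * (m * y))) * (reflWeight θ x p * Real.exp (l * (Λ p : ℝ))) :=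
          Finset.sum_le_sum fun p _ => term_le p
      _ = Real.exp (-(l * (m * y))) * ∑ p ∈ s, reflWeight θ x p * Real.exp (l * (Λ p : ℝ)) :=
          (Finset.mul_sum _ _ _).symm
      _ ≤ Real.exp (-(l * (m * y))) * (2 * Real.exp (30 * l ^ 2) ^ θ) := by
          apply mul_le_mul_of_nonneg_left ?_ (Real.exp_pos _).le
          have hterm_nonneg : ∀ p ∈ s, (0:ℝ) ≤ reflWeight θ x p * Real.exp (l * (Λ p : ℝ)) :=
            fun p _ => mul_nonneg (reflWeight_nonneg θ x p) (Real.exp_pos _).le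
          have h2 : ENNReal.ofReal (∑ p ∈ s, reflWeight θ x p * Real.exp (l * (Λ p : ℝ)))
              ≤ ENNReal.ofReal (hfun l x * Real.exp (30 * l ^ 2) ^ θ) := by
            rw [ENNReal.ofReal_sum_of_nonneg hterm_nonneg]
            calc ∑ p ∈ s, ENNReal.ofReal (reflWeight θ x p * Real.exp (l * (Λ p : ℝ)))
                = ∑ p ∈ s, (if p 0 = x then (1:ℝ≥0∞) else 0) *
                    ∏ u : Fin θ, Qe l (p u.castSucc) (p u.succ) :=
                  Finset.sum_congr rfl fun p _ => (ennTerm_eq l θ x p).symm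
              _ ≤ Fe l θ x := by
                  unfold Fe
                  exact ENNReal.sum_le_tsum s
              _ ≤ ENNReal.ofReal (hfun l x * Real.exp (30 * l ^ 2) ^ θ) := Fe_le l hl hl15 θ x
          have h3 := (ENNReal.ofReal_le_ofReal_iff
            (mul_nonneg (hfun_pos l x).le hKpow)).1 h2
          have h4 : hfun l x * Real.exp (30 * l ^ 2) ^ θ ≤ 2 * Real.exp (30 * l ^ 2) ^ θ :=
            mul_le_mul_of_nonneg_right (hfun_le_two l hl x) hKpow
          linarith
  by_cases hbig : (θ : ℝ) < m * y
  · -- every summand vanishes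
    have hz : ∀ p : Fin (θ + 1) → ℕ,
        (if m * y ≤ ((Λ p : ℕ) : ℝ) then reflWeight θ x p else 0) = 0 := by
      intro p
      rw [if_neg]
      intro hcond
      exact absurd (le_trans hcond (hΛle p)) (not_le.2 hbig)
    rw [tsum_congr hz, tsum_zero]
    positivity
  · push_neg at hbig
    by_cases hy0 : y = 0
    · subst hy0
      have := main 0 le_rfl (by norm_num)
      simp only [mul_zero, zero_mul, neg_zero, Real.exp_zero, one_pow, mul_one, one_mul] at this ⊢
      convert this using 2
      norm_num
    · have hypos : 0 < y := lt_of_le_of_ne hy (Ne.symm hy0)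
      have hmy : 0 < m * y := mul_pos (by linarith) hypos
      have hθpos : (0:ℝ) < (θ:ℝ) := lt_of_lt_of_le hmy hbig
      set l := m * y / (60 * (θ:ℝ)) with hldef
      have hl : 0 ≤ l := by positivity
      have hl15 : l ≤ 1/15 := by
        rw [hldef, div_le_iff₀ (by positivity)]
        nlinarith
      have hbound := main l hl hl15
      have hfloor : (θ:ℝ) ≤ m ^ 2 * t := Nat.floor_le (by positivity)
      have hexp_eq : Real.exp (-(l * (m * y))) * (2 * Real.exp (30 * l ^ 2) ^ θ)
          = 2 * Real.exp ((θ:ℝ) * (30 * l ^ 2) - l * (m * y)) := by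
        rw [← Real.exp_nat_mul]
        rw [show Real.exp (-(l * (m * y))) * (2 * Real.exp ((θ:ℝ) * (30 * l ^ 2)))
          = 2 * (Real.exp (-(l * (m * y))) * Real.exp ((θ:ℝ) * (30 * l ^ 2))) from by ring,
          ← Real.exp_add]
        congr 2
        ring
      have hexp_le : (θ:ℝ) * (30 * l ^ 2) - l * (m * y) ≤ -(1/(120*t)) * y ^ 2 := by
        have hl_eq : (θ:ℝ) * (30 * l ^ 2) - l * (m * y) = -((m*y)^2 / (120 * (θ:ℝ))) := by
          rw [hldef]; field_simp; ring
        rw [hl_eq]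
        have key : y ^ 2 / (120 * t) ≤ (m * y) ^ 2 / (120 * (θ:ℝ)) := by
          rw [div_le_div_iff₀ (by positivity) (by positivity)]
          nlinarith [mul_le_mul_of_nonneg_left hfloor (sq_nonneg y)]
        have heq : -(1/(120*t)) * y ^ 2 = -(y ^ 2 / (120 * t)) := by ring
        rw [heq]
        linarith
      calc (∑' p : Fin (θ + 1) → ℕ, if m * y ≤ ((Λ p : ℕ) : ℝ) then reflWeight θ x p else 0)
          ≤ Real.exp (-(l * (m * y))) * (2 * Real.exp (30 * l ^ 2) ^ θ) := hbound
        _ = 2 * Real.exp ((θ:ℝ) * (30 * l ^ 2) - l * (m * y)) := hexp_eq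
        _ ≤ 2 * Real.exp (-(1/(120*t)) * y ^ 2) := by
            apply mul_le_mul_of_nonneg_left (Real.exp_le_exp.2 hexp_le) (by norm_num)
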